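/- arXiv:2203.05125 — 8 statements merged into one kernel-verified Lean document; each statement's English description precedes it below -/
import Mathlib

section
/- Let U ⊆ ℝ^n_+ with 0 ∈ U, let g : ℝ^n → ℝ satisfy g(0) = 0, and suppose g attains its minimum over U at some point of U. Then the lifted ℓ1 regularization is monotone decreasing in the parameter α: for all α_1 > α_2 > 0 and every x ∈ ℝ^n, F^U_{g,α_1}(x) ≤ F^U_{g,α_2}(x), provided the infimum defining F^U_{g,α_2}(x) is attained. -/
/-!
Let `u` attain `F^U_{g,α₂}(x)`. Comparing with the admissible point `0`, whose value is `0`, gives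
`⟨u, |x|⟩ + α₂ g(u) ≤ 0`; since `u ≥ 0` the first term is nonnegative, so `g(u) ≤ 0`. Hence raising
the weight on `g` can only lower the value at `u`, and `F^U_{g,α₁}(x) ≤ ⟨u, |x|⟩ + α₁ g(u) ≤ F^U_{g,α₂}(x)`.
-/

/-- The lifted ℓ1 regularization `F^U_{g,α}(x) = inf_{u ∈ U} (⟨u, |x|⟩ + α g(u))`. -/
noncomputable def liftedL1 {n : ℕ} (U : Set (Fin n → ℝ)) (g : (Fin n → ℝ) → ℝ) (α : ℝ)
    (x : Fin n → ℝ) : EReal :=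
  ⨅ u ∈ U, (((∑ i, u i * |x i|) + α * g u : ℝ) : EReal)

section LiftedL1

variable {n : ℕ} {U : Set (Fin n → ℝ)} {g : (Fin n → ℝ) → ℝ} {α : ℝ} {x u : Fin n → ℝ}

theorem liftedL1_le_of_mem (hu : u ∈ U) :
    liftedL1 U g α x ≤ (((∑ i, u i * |x i|) + α * g u : ℝ) : EReal) :=
  biInf_le _ hu

theorem liftedL1_le_zero (h0U : (0 : Fin n → ℝ) ∈ U) (hg0 : g 0 = 0) :
    liftedL1 U g α x ≤ 0 := by
  simpa [hg0] using liftedL1_le_of_mem (g := g) (α := α) (x := x) h0U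

theorem sum_mul_abs_nonneg (hu : ∀ i, 0 ≤ u i) : 0 ≤ ∑ i, u i * |x i| :=
  Finset.sum_nonneg fun i _ => mul_nonneg (hu i) (abs_nonneg _)

theorem nonpos_of_liftedL1_eq (hα : 0 < α) (hu : ∀ i, 0 ≤ u i)
    (h0U : (0 : Fin n → ℝ) ∈ U) (hg0 : g 0 = 0)
    (hattain : liftedL1 U g α x = (((∑ i, u i * |x i|) + α * g u : ℝ) : EReal)) :
    g u ≤ 0 := by
  have hval : (∑ i, u i * |x i|) + α * g u ≤ 0 := by
    exact_mod_cast hattain ▸ liftedL1_le_zero h0U hg0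
  have hsum := sum_mul_abs_nonneg (x := x) hu
  exact nonpos_of_mul_nonpos_right (by linarith) hα

end LiftedL1

theorem liftedL1_antitone_in_alpha_general {n : ℕ} (U : Set (Fin n → ℝ))
    (hU : ∀ u ∈ U, ∀ i, 0 ≤ u i) (h0U : (0 : Fin n → ℝ) ∈ U)
    (g : (Fin n → ℝ) → ℝ) (hg0 : g 0 = 0)
    (α₁ α₂ : ℝ) (h₁₂ : α₁ > α₂) (h₂ : α₂ > 0) (x : Fin n → ℝ)
    (hattain : ∃ u ∈ U,
      liftedL1 U g α₂ x = (((∑ i, u i * |x i|) + α₂ * g u : ℝ) : EReal)) :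
    liftedL1 U g α₁ x ≤ liftedL1 U g α₂ x := by
  obtain ⟨u, huU, hu⟩ := hattain
  have hgu : g u ≤ 0 := nonpos_of_liftedL1_eq h₂ (hU u huU) h0U hg0 hu
  calc liftedL1 U g α₁ x ≤ (((∑ i, u i * |x i|) + α₁ * g u : ℝ) : EReal) :=
        liftedL1_le_of_mem huU
    _ ≤ (((∑ i, u i * |x i|) + α₂ * g u : ℝ) : EReal) := by
        exact_mod_cast add_le_add_right (mul_le_mul_of_nonpos_right h₁₂.le hgu) _
    _ = liftedL1 U g α₂ x := hu.symm

/-- If `U ⊆ ℝ^n_+` contains `0`, `g(0) = 0` and `g` attains its minimum over `U`, then the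
lifted ℓ1 regularization is monotone decreasing in `α`: for `α₁ > α₂ > 0`,
`F^U_{g,α₁}(x) ≤ F^U_{g,α₂}(x)`, provided the infimum defining `F^U_{g,α₂}(x)` is attained. -/
theorem liftedL1_antitone_in_alpha {n : ℕ} (U : Set (Fin n → ℝ))
    (hU : ∀ u ∈ U, ∀ i, 0 ≤ u i) (h0U : (0 : Fin n → ℝ) ∈ U)
    (g : (Fin n → ℝ) → ℝ) (hg0 : g 0 = 0)
    (hgmin : ∃ u₀ ∈ U, ∀ u ∈ U, g u₀ ≤ g u)
    (α₁ α₂ : ℝ) (h₁₂ : α₁ > α₂) (h₂ : α₂ > 0) (x : Fin n → ℝ)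
    (hattain : ∃ u ∈ U,
      liftedL1 U g α₂ x = (((∑ i, u i * |x i|) + α₂ * g u : ℝ) : EReal)) :
    liftedL1 U g α₁ x ≤ liftedL1 U g α₂ x :=
  liftedL1_antitone_in_alpha_general U hU h0U g hg0 α₁ α₂ h₁₂ h₂ x hattain
end

section
/- Let U = [0,1]^n and let g(u) = Σ_{i=1}^n g_i(u_i) be separable, where each g_i : [0,1] → ℝ is differentiable with bounded derivative on [0,1], strictly decreasing on [0,1], and satisfies g_i(0) = 0 and g_i(1) = -1. Then for every x ∈ ℝ^n there exists α_0 > 0 such that for all 0 < α ≤ α_0, (1/α) F^U_{g,α}(x) + n = ‖x‖_0, where ‖x‖_0 is the number of nonzero components of x. In particular, (1/α) F^U_{g,α}(x) + n → ‖x‖_0 as α → 0⁺. -/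
open Finset Filter Topology Set

theorem abs_le_mul_abs_of_abs_derivWithin_le {f : ℝ → ℝ} {s : Set ℝ} {M : ℝ}
    (hs : Convex ℝ s) (hf : DifferentiableOn ℝ f s) (hM : ∀ t ∈ s, |derivWithin f s t| ≤ M)
    (h0s : 0 ∈ s) (h0 : f 0 = 0) {t : ℝ} (ht : t ∈ s) : |f t| ≤ M * |t| := by
  simpa [h0] using hs.norm_image_sub_le_of_norm_derivWithin_le hf hM h0s ht

theorem IsMinOn.sum_pi {ι : Type*} [Fintype ι] {α : ι → Type*} {β : Type*} [AddCommMonoid β]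
    [PartialOrder β] [IsOrderedAddMonoid β] {f : ∀ i, α i → β} {s : ∀ i, Set (α i)}
    {a : ∀ i, α i} (h : ∀ i, IsMinOn (f i) (s i) (a i)) :
    IsMinOn (fun u => ∑ i, f i (u i)) (univ.pi s) a :=
  fun _ hu => sum_le_sum fun i _ => h i (hu i (mem_univ i))

theorem IsMinOn.biInf_eq {α β : Type*} [CompleteLattice β] {f : α → β} {s : Set α} {a : α}
    (h : IsMinOn f s a) (ha : a ∈ s) : ⨅ x ∈ s, f x = f a :=
  le_antisymm (iInf₂_le a ha) (le_iInf₂ h)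

theorem exists_forall_Ioc_of_eventually_nhdsGT {α : Type*} [TopologicalSpace α] [LinearOrder α]
    [OrderTopology α] [NoMaxOrder α] [DenselyOrdered α] {a : α} {p : α → Prop}
    (h : ∀ᶠ x in 𝓝[>] a, p x) : ∃ b > a, ∀ x, a < x → x ≤ b → p x :=
  let ⟨b, hab, hsub⟩ := mem_nhdsGT_iff_exists_Ioc_subset.mp h
  ⟨b, hab, fun _ hax hxb => hsub ⟨hax, hxb⟩⟩

theorem liftedL1_eq_of_isMinOn {n : ℕ} {U : Set (Fin n → ℝ)} {g : (Fin n → ℝ) → ℝ} {α : ℝ}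
    {x u₀ : Fin n → ℝ} (h : IsMinOn (fun u => (∑ i, u i * |x i|) + α * g u) U u₀) (hu₀ : u₀ ∈ U) :
    liftedL1 U g α x = (((∑ i, u₀ i * |x i|) + α * g u₀ : ℝ) : EReal) :=
  (h.comp_mono EReal.coe_strictMono.monotone).biInf_eq hu₀

section Coordinate

variable {φ : ℝ → ℝ} {M : ℝ}

theorem isMinOn_Icc_zero_of_abs_le_mul (hφ : ∀ t ∈ Icc (0 : ℝ) 1, |φ t| ≤ M * t) {c α : ℝ}
    (hα : 0 ≤ α) (hc : α * M ≤ c) : IsMinOn (fun t => t * c + α * φ t) (Icc 0 1) 0 := by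
  have hφ0 : φ 0 = 0 := abs_nonpos_iff.mp (by simpa using hφ 0 (by simp))
  refine isMinOn_iff.mpr fun t ht => ?_
  have hlow : α * -(M * t) ≤ α * φ t := mul_le_mul_of_nonneg_left (neg_le_of_abs_le (hφ t ht)) hα
  calc 0 * c + α * φ 0 = 0 := by simp [hφ0]
    _ ≤ t * (c - α * M) := mul_nonneg ht.1 (sub_nonneg.mpr hc)
    _ ≤ t * c + α * φ t := by linarith

theorem isMinOn_Icc_one_of_antitoneOn (hφ : AntitoneOn φ (Icc 0 1)) {α : ℝ} (hα : 0 ≤ α) :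
    IsMinOn (fun t => α * φ t) (Icc 0 1) 1 := fun _ ht =>
  mul_le_mul_of_nonneg_left (hφ ht (right_mem_Icc.mpr zero_le_one) ht.2) hα

theorem eventually_nhdsGT_isMinOn_Icc (hanti : AntitoneOn φ (Icc 0 1))
    (hφ : ∀ t ∈ Icc (0 : ℝ) 1, |φ t| ≤ M * t) (c : ℝ) :
    ∀ᶠ α in 𝓝[>] 0, IsMinOn (fun t => t * |c| + α * φ t) (Icc 0 1) (if c = 0 then 1 else 0) := by
  by_cases hc : c = 0
  · filter_upwards [self_mem_nhdsWithin] with α hα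
    simpa [hc] using isMinOn_Icc_one_of_antitoneOn hanti (le_of_lt hα)
  · have hlim : Tendsto (fun α : ℝ => α * M) (𝓝[>] 0) (𝓝 0) :=
      tendsto_nhdsWithin_of_tendsto_nhds ((continuous_mul_const M).tendsto' 0 0 (zero_mul M))
    filter_upwards [self_mem_nhdsWithin, hlim.eventually_le_const (abs_pos.mpr hc)] with α hα hαc
    simpa [hc] using isMinOn_Icc_zero_of_abs_le_mul hφ (le_of_lt hα) hαc

end Coordinate

open Finset in
/-- For `U = [0,1]^n` and `g` separable of Type B (each `g_i` differentiable with bounded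
derivative on `[0,1]`, strictly decreasing, `g_i(0) = 0`, `g_i(1) = -1`), for every `x` there
exists `α₀ > 0` such that for all `0 < α ≤ α₀`, `(1/α) F^U_{g,α}(x) + n = ‖x‖₀`. -/
theorem liftedL1_approx_l0 {n : ℕ} (g : Fin n → ℝ → ℝ)
    (hdiff : ∀ i, DifferentiableOn ℝ (g i) (Set.Icc 0 1))
    (hbdd : ∀ i, ∃ M : ℝ, ∀ t ∈ Set.Icc (0 : ℝ) 1,
      |derivWithin (g i) (Set.Icc 0 1) t| ≤ M)
    (hdec : ∀ i, StrictAntiOn (g i) (Set.Icc 0 1))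
    (h0 : ∀ i, g i 0 = 0) (h1 : ∀ i, g i 1 = -1) :
    ∀ x : Fin n → ℝ, ∃ α₀ > (0 : ℝ), ∀ α : ℝ, 0 < α → α ≤ α₀ →
      ((α⁻¹ : ℝ) : EReal) *
          liftedL1 {u : Fin n → ℝ | ∀ i, u i ∈ Set.Icc (0 : ℝ) 1}
            (fun u => ∑ i, g i (u i)) α x
        + ((n : ℝ) : EReal)
      = ((((univ.filter fun i => x i ≠ 0).card : ℝ)) : EReal) := by
  intro x
  choose M hM using hbdd
  have hlin (i) : ∀ t ∈ Icc (0 : ℝ) 1, |g i t| ≤ M i * t := fun t ht => by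
    simpa [abs_of_nonneg ht.1] using abs_le_mul_abs_of_abs_derivWithin_le (convex_Icc 0 1)
      (hdiff i) (hM i) (left_mem_Icc.mpr zero_le_one) (h0 i) ht
  set u₀ : Fin n → ℝ := fun i => if x i = 0 then 1 else 0
  have hu₀ : u₀ ∈ {u : Fin n → ℝ | ∀ i, u i ∈ Set.Icc (0 : ℝ) 1} := fun i => by
    by_cases h : x i = 0 <;> simp [u₀, h]
  have hmin : ∀ᶠ α in 𝓝[>] 0, IsMinOn (fun u => (∑ i, u i * |x i|) + α * ∑ i, g i (u i))
      {u : Fin n → ℝ | ∀ i, u i ∈ Set.Icc (0 : ℝ) 1} u₀ :=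
    (eventually_all.mpr fun i => eventually_nhdsGT_isMinOn_Icc (hdec i).antitoneOn (hlin i) (x i))
      |>.mono fun α h => by
        simpa only [mul_sum, ← sum_add_distrib] using
          (IsMinOn.sum_pi h).on_subset (s := {u | ∀ i, u i ∈ Set.Icc (0 : ℝ) 1})
            fun _ hu i _ => hu i
  obtain ⟨α₀, hα₀, hsmall⟩ := exists_forall_Ioc_of_eventually_nhdsGT hmin
  refine ⟨α₀, hα₀, fun α hα hαα₀ => ?_⟩
  have hval : (∑ i, u₀ i * |x i|) + α * ∑ i, g i (u₀ i) = -α * #{i | x i = 0} := by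
    rw [mul_sum, ← sum_add_distrib, mul_comm (-α), ← nsmul_eq_mul, ← sum_const, sum_filter]
    exact sum_congr rfl fun i _ => by by_cases h : x i = 0 <;> simp [u₀, h, h0, h1]
  have hcard : (#{i | x i = 0} + #{i | x i ≠ 0} : ℝ) = n := by
    exact_mod_cast (card_filter_add_card_filter_not (s := univ) (fun i => x i = 0)).trans
      (card_fin n)
  rw [liftedL1_eq_of_isMinOn (hsmall α hα hαα₀) hu₀, hval, ← EReal.coe_mul, ← EReal.coe_add,
    EReal.coe_eq_coe_iff]
  field_simp
  linarith
end

section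
/- Let U = [0,1]^n and let g(u) = Σ_{i=1}^n g_i(u_i) be separable, where each g_i : [0,1] → ℝ is differentiable with bounded derivative on [0,1], strictly decreasing on [0,1], and satisfies g_i(0) = 0 and g_i(1) = -1. If (α_k)_{k≥0} is a strictly decreasing sequence of positive reals converging to 0, then for every x ∈ ℝ^n the sequence k ↦ (1/α_k) F^U_{g,α_k}(x) is monotonically increasing in k and converges to ‖x‖_0 - n as k → ∞. -/
open Finset Filter in
/-- For `U = [0,1]^n` and `g` separable of Type B, if `(α_k)` is a strictly decreasing sequence
of positive reals converging to `0`, then for every `x` the sequence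
`k ↦ (1/α_k) F^U_{g,α_k}(x)` is monotonically increasing and converges to `‖x‖₀ - n`. -/
theorem liftedL1_homotopy_increasing {n : ℕ} (g : Fin n → ℝ → ℝ)
    (hdiff : ∀ i, DifferentiableOn ℝ (g i) (Set.Icc 0 1))
    (hbdd : ∀ i, ∃ M : ℝ, ∀ t ∈ Set.Icc (0 : ℝ) 1,
      |derivWithin (g i) (Set.Icc 0 1) t| ≤ M)
    (hdec : ∀ i, StrictAntiOn (g i) (Set.Icc 0 1))
    (h0 : ∀ i, g i 0 = 0) (h1 : ∀ i, g i 1 = -1)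
    (α : ℕ → ℝ) (hαpos : ∀ k, 0 < α k) (hαdec : StrictAnti α)
    (hαlim : Tendsto α atTop (nhds 0)) :
    ∀ x : Fin n → ℝ,
      Monotone (fun k : ℕ =>
        (((α k)⁻¹ : ℝ) : EReal) *
          liftedL1 {u : Fin n → ℝ | ∀ i, u i ∈ Set.Icc (0 : ℝ) 1}
            (fun u => ∑ i, g i (u i)) (α k) x) ∧
      Tendsto (fun k : ℕ =>
        (((α k)⁻¹ : ℝ) : EReal) *
          liftedL1 {u : Fin n → ℝ | ∀ i, u i ∈ Set.Icc (0 : ℝ) 1}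
            (fun u => ∑ i, g i (u i)) (α k) x)
        atTop
        (nhds (((((univ.filter fun i => x i ≠ 0).card : ℝ) - n : ℝ)) : EReal)) := by
  intro x
  classical
  set S : Set (Fin n → ℝ) := {u | ∀ i, u i ∈ Set.Icc (0:ℝ) 1} with hSdef
  set G : (Fin n → ℝ) → ℝ := fun u => ∑ i, g i (u i) with hGdef
  have hScompact : IsCompact S := by
    have hS : S = Set.pi Set.univ (fun _ => Set.Icc (0:ℝ) 1) := by
      ext u
      constructor
      · intro h i _; exact h i
      · intro h i; exact h i (Set.mem_univ i)
    rw [hS]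
    exact isCompact_univ_pi fun _ => isCompact_Icc
  have hSne : S.Nonempty := ⟨fun _ => 0, fun i => ⟨le_refl _, zero_le_one⟩⟩
  set obj : ℝ → (Fin n → ℝ) → ℝ := fun c u => c * ∑ i, u i * |x i| + G u with hobj
  have hcont : ∀ c, ContinuousOn (obj c) S := by
    intro c
    apply ContinuousOn.add
    · exact (Continuous.continuousOn (by continuity))
    · apply continuousOn_finset_sum
      intro i _
      exact ((hdiff i).continuousOn).comp (continuous_apply i).continuousOn
        (fun u hu => hu i)
  have hmin : ∀ c : ℝ, ∃ u ∈ S, IsMinOn (obj c) S u :=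
    fun c => hScompact.exists_isMinOn hSne (hcont c)
  choose umin humem humin using hmin
  set ψ : ℝ → ℝ := fun c => obj c (umin c) with hψdef
  have hψ_le : ∀ c, ∀ u ∈ S, ψ c ≤ obj c u :=
    fun c u hu => isMinOn_iff.mp (humin c) u hu
  have hsum_nonneg : ∀ u ∈ S, 0 ≤ ∑ i, u i * |x i| := by
    intro u hu
    exact Finset.sum_nonneg fun i _ => mul_nonneg (hu i).1 (abs_nonneg _)
  have hψmono : ∀ c c' : ℝ, c ≤ c' → ψ c ≤ ψ c' := by
    intro c c' hcc'
    have hstep : obj c (umin c') ≤ obj c' (umin c') := by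
      simp only [hobj]
      have := mul_le_mul_of_nonneg_right hcc' (hsum_nonneg _ (humem c'))
      linarith
    exact (hψ_le c (umin c') (humem c')).trans hstep
  -- key identity
  have key : ∀ k, (((α k)⁻¹ : ℝ) : EReal) * liftedL1 S G (α k) x
      = ((ψ ((α k)⁻¹) : ℝ) : EReal) := by
    intro k
    have hαne : α k ≠ 0 := (hαpos k).ne'
    have hrw : ∀ u : Fin n → ℝ, (∑ i, u i * |x i|) + α k * G u
        = α k * obj ((α k)⁻¹) u := by
      intro u
      simp only [hobj]
      rw [mul_add, ← mul_assoc, mul_inv_cancel₀ hαne, one_mul]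
    have step1 : liftedL1 S G (α k) x = ((α k * ψ ((α k)⁻¹) : ℝ) : EReal) := by
      apply le_antisymm
      · refine (iInf₂_le (umin ((α k)⁻¹)) (humem ((α k)⁻¹))).trans_eq ?_
        rw [hrw]
      · refine le_iInf₂ fun u hu => ?_
        rw [EReal.coe_le_coe_iff, hrw u]
        exact mul_le_mul_of_nonneg_left (hψ_le _ u hu) (hαpos k).le
    rw [step1, ← EReal.coe_mul, ← mul_assoc, inv_mul_cancel₀ hαne, one_mul]
  constructor
  · intro k l hkl
    simp only [key]
    rw [EReal.coe_le_coe_iff]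
    apply hψmono
    exact inv_anti₀ (hαpos l) (hαdec.antitone hkl)
  · -- the limit
    choose M hM using hbdd
    set M' : Fin n → ℝ := fun i => max (M i) 1 with hM'def
    have hM'pos : ∀ i, 0 < M' i := fun i => lt_of_lt_of_le one_pos (le_max_right _ _)
    have hLip : ∀ i, ∀ t ∈ Set.Icc (0:ℝ) 1, -(M' i * t) ≤ g i t := by
      intro i t ht
      have hb : ∀ s ∈ Set.Icc (0:ℝ) 1, ‖derivWithin (g i) (Set.Icc 0 1) s‖ ≤ M' i :=
        fun s hs => le_trans (hM i s hs) (le_max_left _ _)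
      have h := (convex_Icc (0:ℝ) 1).norm_image_sub_le_of_norm_derivWithin_le
        (hdiff i) hb (Set.left_mem_Icc.2 zero_le_one) ht
      rw [h0 i, sub_zero, sub_zero, Real.norm_eq_abs, Real.norm_eq_abs,
        abs_of_nonneg ht.1] at h
      linarith [neg_abs_le (g i t)]
    set T : Finset (Fin n) := univ.filter (fun i => x i ≠ 0) with hTdef
    set C : ℝ := ∑ i ∈ T, M' i / |x i| with hCdef
    set C' : ℝ := max C 1 with hC'def
    have hC'pos : (0:ℝ) < C' := lt_of_lt_of_le one_pos (le_max_right _ _)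
    have hC_ge : ∀ i ∈ T, M' i / |x i| ≤ C :=
      fun i hi => Finset.single_le_sum
        (fun j _ => div_nonneg (hM'pos j).le (abs_nonneg _)) hi
    have hcard : ((univ.filter fun i => x i = 0).card : ℝ) = n - T.card := by
      have h := Finset.card_filter_add_card_filter_not
        (s := (univ : Finset (Fin n))) (p := fun i => x i = 0)
      have hT : (univ.filter fun i => ¬ x i = 0) = T := by
        simp only [hTdef, Ne]
      rw [hT, Finset.card_univ, Fintype.card_fin] at h
      rw [eq_sub_iff_add_eq]
      exact_mod_cast h
    have hconst : ∑ i, (if x i = 0 then (-1:ℝ) else 0) = (T.card : ℝ) - n := by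
      have h2 : ∑ i, (if x i = 0 then (-1:ℝ) else 0)
          = ((univ.filter fun i => x i = 0).card : ℝ) * (-1) := by
        rw [Finset.sum_ite, Finset.sum_const, Finset.sum_const]
        simp [mul_comm]
      rw [h2, hcard]; ring
    have hlow : ∀ c : ℝ, C' ≤ c → ∀ u ∈ S, (T.card : ℝ) - n ≤ obj c u := by
      intro c hc u hu
      have hobju : obj c u = ∑ i, (c * (u i * |x i|) + g i (u i)) := by
        simp only [hobj, hGdef, Finset.mul_sum, ← Finset.sum_add_distrib]
      rw [hobju, ← hconst]
      apply Finset.sum_le_sum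
      intro i _
      by_cases hxi : x i = 0
      · have hle : g i 1 ≤ g i (u i) := by
          rcases eq_or_lt_of_le (hu i).2 with h|h
          · rw [h]
          · exact (hdec i (hu i) (Set.right_mem_Icc.2 zero_le_one) h).le
        rw [h1 i] at hle
        rw [if_pos hxi, hxi, abs_zero, mul_zero, mul_zero, zero_add]
        exact hle
      · rw [if_neg hxi]
        have habs : 0 < |x i| := abs_pos.2 hxi
        have hc2 : M' i / |x i| ≤ c :=
          le_trans (hC_ge i (by simp [hTdef, hxi]))
            (le_trans (le_max_left _ _) hc)
        have hc3 : M' i ≤ c * |x i| := (div_le_iff₀ habs).mp hc2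
        have hl := hLip i (u i) (hu i)
        nlinarith [(hu i).1, mul_le_mul_of_nonneg_right hc3 (hu i).1]
    have hup : ∀ c : ℝ, ψ c ≤ (T.card : ℝ) - n := by
      intro c
      set u₀ : Fin n → ℝ := fun i => if x i = 0 then 1 else 0 with hu₀def
      have hu₀S : u₀ ∈ S := by
        intro i
        simp only [hu₀def]
        split <;> constructor <;> norm_num
      refine (hψ_le c u₀ hu₀S).trans ?_
      have hz : ∑ i, u₀ i * |x i| = 0 :=
        Finset.sum_eq_zero (fun i _ => by
          by_cases h : x i = 0 <;> simp [hu₀def, h])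
      have hg : G u₀ = ∑ i, (if x i = 0 then (-1:ℝ) else 0) := by
        simp only [hGdef]
        apply Finset.sum_congr rfl
        intro i _
        by_cases h : x i = 0 <;> simp [hu₀def, h, h0, h1]
      simp only [hobj]
      rw [hz, hg, hconst, mul_zero, zero_add]
    have hψ_eq : ∀ c : ℝ, C' ≤ c → ψ c = (T.card : ℝ) - n :=
      fun c hc => le_antisymm (hup c) (hlow c hc (umin c) (humem c))
    have hev : ∀ᶠ k in atTop, C' ≤ (α k)⁻¹ := by
      have h2 : ∀ᶠ k in atTop, α k < C'⁻¹ :=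
        hαlim.eventually_lt_const (by positivity)
      filter_upwards [h2] with k hk
      have h3 : C' * α k < C' * C'⁻¹ := mul_lt_mul_of_pos_left hk hC'pos
      rw [mul_inv_cancel₀ hC'pos.ne'] at h3
      have h4 : C' * α k ≤ 1 := h3.le
      calc C' = C' * α k * (α k)⁻¹ := (mul_inv_cancel_right₀ (hαpos k).ne' C').symm
        _ ≤ 1 * (α k)⁻¹ :=
            mul_le_mul_of_nonneg_right h4 (inv_nonneg.2 (hαpos k).le)
        _ = (α k)⁻¹ := one_mul _
    have heq : (fun k : ℕ => (((α k)⁻¹ : ℝ) : EReal) * liftedL1 S G (α k) x)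
        =ᶠ[atTop] (fun _ => (((T.card : ℝ) - n : ℝ) : EReal)) := by
      filter_upwards [hev] with k hk
      rw [key k, hψ_eq _ hk]
    exact Tendsto.congr' heq.symm tendsto_const_nhds
end

section
/- Let A ∈ ℝ^{m×n} and b ∈ ℝ^m with Ω = {x ∈ ℝ^n : A x = b} nonempty, let s := min{‖x‖_0 : x ∈ Ω} and ε_0 := inf{|x|_{(s)} : x ∈ Ω} > 0, where |x|_{(s)} is the s-th largest component of |x|. Let U = [0,1]^n and g(u) = Σ_{i=1}^n g_i(u_i), where each g_i : [0,1] → ℝ is differentiable with bounded derivative on [0,1], strictly decreasing on [0,1], g_i(0) = 0 and g_i(1) = -1 (a Type B function). Then there exists α > 0 such that the joint minimization min_{x ∈ Ω, u ∈ U} (⟨u, |x|⟩ + α g(u)) is equivalent to min_{x ∈ Ω} ‖x‖_0: (a) if (x*, u*) is a minimizer of the joint problem, then ‖x*‖_0 = s, so x* is a minimizer of the ℓ0 problem; and (b) conversely, if x* ∈ Ω has ‖x*‖_0 = s, then taking u*_i = 1 when x*_i = 0 and u*_i = 0 otherwise gives a minimizer (x*, u*) of the joint problem, whose minimum value is -α(n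 - s). -/
/-!
Take `ε = ε₀ / 2`, so that every feasible `x` has at least `s` coordinates with `|x i| ≥ ε`, and
`α = ε / L`, where `L` bounds the slopes of the `g i` on `[0, 1]`, so that `α * g i t ≥ -ε * t`.
Coordinatewise, `u i * |x i| + α * g i (u i)` is then at least `-α` (as `g i ≥ g i 1 = -1`), at
least `0` when `|x i| ≥ ε`, and equal to `-α` only if `u i = 1` and `x i = 0`. Summing gives the
lower bound `-α * (n - s)` for the joint objective, which the indicator weights of an `s`-sparse
feasible point attain; and a point attaining it has support exactly `{i | ε ≤ |x i|}`, of size `s`.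
-/

/-- The number of nonzero components of `x` (the ℓ0 "norm"). -/
noncomputable def l0norm {n : ℕ} (x : Fin n → ℝ) : ℕ :=
  (Finset.univ.filter fun i => x i ≠ 0).card

/-- The `s`-th largest component of `|x|`: the largest threshold `t` such that at least `s`
components of `|x|` are `≥ t`. -/
noncomputable def sthLargest {n : ℕ} (x : Fin n → ℝ) (s : ℕ) : ℝ :=
  sSup {t : ℝ | s ≤ (Finset.univ.filter fun i => t ≤ |x i|).card}

open Finset

theorem exists_pos_forall_neg_mul_le {ι : Type*} [Finite ι] {g : ι → ℝ → ℝ}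
    (hdiff : ∀ i, DifferentiableOn ℝ (g i) (Set.Icc 0 1))
    (hbdd : ∀ i, ∃ M : ℝ, ∀ t ∈ Set.Icc (0 : ℝ) 1, |derivWithin (g i) (Set.Icc 0 1) t| ≤ M)
    (h0 : ∀ i, g i 0 = 0) :
    ∃ L > 0, ∀ i, ∀ t ∈ Set.Icc (0 : ℝ) 1, -(L * t) ≤ g i t := by
  choose M hM using hbdd
  obtain ⟨L, hL⟩ := Finite.exists_le M
  refine ⟨max L 1, by positivity, fun i t ht => ?_⟩
  have hmvt := norm_image_sub_le_of_norm_deriv_le_segment (hdiff i)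
    (fun y hy => (hM i y (Set.Ico_subset_Icc_self hy)).trans ((hL i).trans (le_max_left L 1))) t ht
  rw [Real.norm_eq_abs, h0 i, sub_zero, sub_zero] at hmvt
  linarith [neg_abs_le (g i t)]

theorem le_card_filter_le_abs_of_lt_sthLargest {n s : ℕ} {x : Fin n → ℝ} {ε : ℝ}
    (hε : 0 ≤ ε) (h : ε < sthLargest x s) : s ≤ #{i | ε ≤ |x i|} := by
  by_contra! hlt
  refine h.not_ge (Real.sSup_le (fun t ht => ?_) hε)
  by_contra! hεt
  have hsub : #{i | t ≤ |x i|} ≤ #{i | ε ≤ |x i|} :=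
    card_le_card (monotone_filter_right _ fun i _ (hi : t ≤ |x i|) => hεt.le.trans hi)
  exact (ht.trans hsub).not_gt hlt

section Coordinate

variable {f : ℝ → ℝ} {α ε a t : ℝ}

theorem ite_le_mul_abs_add_mul (hα : 0 ≤ α) (hf : StrictAntiOn f (Set.Icc 0 1)) (hf1 : f 1 = -1)
    (ht : t ∈ Set.Icc 0 1) (hlip : -(ε * t) ≤ α * f t) :
    (if ε ≤ |a| then 0 else -α) ≤ t * |a| + α * f t := by
  have hf_ge : -1 ≤ f t := hf1 ▸ hf.antitoneOn ht (Set.right_mem_Icc.2 zero_le_one) ht.2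
  split_ifs with hεa
  · nlinarith [ht.1]
  · nlinarith [ht.1, abs_nonneg a]

theorem eq_zero_of_mul_abs_add_mul_eq_neg (hα : 0 < α) (hf : StrictAntiOn f (Set.Icc 0 1))
    (hf1 : f 1 = -1) (ht : t ∈ Set.Icc 0 1) (h : t * |a| + α * f t = -α) : a = 0 := by
  have hone : 1 ∈ Set.Icc (0 : ℝ) 1 := Set.right_mem_Icc.2 zero_le_one
  have hf_ge : -1 ≤ f t := hf1 ▸ hf.antitoneOn ht hone ht.2
  have hprod : 0 ≤ t * |a| := mul_nonneg ht.1 (abs_nonneg a)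
  have hft : f t = f 1 := by rw [hf1]; nlinarith
  have ht1 : t = 1 := hf.injOn ht hone hft
  rw [ht1, one_mul] at h
  exact abs_eq_zero.mp (by nlinarith)

end Coordinate

noncomputable def jointObjective {n : ℕ} (g : Fin n → ℝ → ℝ) (α : ℝ) (x u : Fin n → ℝ) : ℝ :=
  ∑ i, u i * |x i| + α * ∑ i, g i (u i)

noncomputable def zeroIndicator {n : ℕ} (x : Fin n → ℝ) (i : Fin n) : ℝ :=
  if x i = 0 then 1 else 0

section Joint

variable {n : ℕ} {g : Fin n → ℝ → ℝ} {α ε : ℝ} {x u : Fin n → ℝ}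

theorem jointObjective_eq_sum : jointObjective g α x u = ∑ i, (u i * |x i| + α * g i (u i)) := by
  rw [jointObjective, sum_add_distrib, mul_sum]

theorem zeroIndicator_mem_Icc (x : Fin n → ℝ) (i : Fin n) : zeroIndicator x i ∈ Set.Icc 0 1 := by
  unfold zeroIndicator; split_ifs <;> norm_num

theorem jointObjective_zeroIndicator (h0 : ∀ i, g i 0 = 0) (h1 : ∀ i, g i 1 = -1) :
    jointObjective g α x (zeroIndicator x) = -α * (n - l0norm x) := by
  have hterm : ∀ i, zeroIndicator x i * |x i| + α * g i (zeroIndicator x i) =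
      if x i = 0 then -α else 0 := by
    intro i; unfold zeroIndicator; split_ifs with hx <;> simp [hx, h0, h1]
  have hcard : (n : ℝ) = #{i | x i = 0} + l0norm x := by
    exact_mod_cast ((card_filter_add_card_filter_not (s := univ) fun i => x i = 0).trans
      (by simp)).symm
  rw [jointObjective_eq_sum, sum_congr rfl fun i _ => hterm i, sum_ite, sum_const_zero,
    sum_const, nsmul_eq_mul, hcard]
  ring

theorem sum_ite_eq_neg_mul (x : Fin n → ℝ) (α ε : ℝ) :
    ∑ i, (if ε ≤ |x i| then 0 else -α) = -α * (n - #{i | ε ≤ |x i|}) := by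
  have hcard : (n : ℝ) = #{i | ε ≤ |x i|} + #{i | ¬ε ≤ |x i|} := by
    exact_mod_cast ((card_filter_add_card_filter_not (s := univ) fun i => ε ≤ |x i|).trans
      (by simp)).symm
  rw [sum_ite, sum_const_zero, zero_add, sum_const, nsmul_eq_mul, hcard]
  ring

variable (hdec : ∀ i, StrictAntiOn (g i) (Set.Icc 0 1)) (h1 : ∀ i, g i 1 = -1)
  (hlip : ∀ i, ∀ t ∈ Set.Icc (0 : ℝ) 1, -(ε * t) ≤ α * g i t) (hu : ∀ i, u i ∈ Set.Icc 0 1)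
include hdec h1 hlip hu

theorem sum_ite_le_jointObjective (hα : 0 ≤ α) :
    ∑ i, (if ε ≤ |x i| then 0 else -α) ≤ jointObjective g α x u := by
  rw [jointObjective_eq_sum]
  exact sum_le_sum fun i _ => ite_le_mul_abs_add_mul hα (hdec i) (h1 i) (hu i) (hlip i _ (hu i))

theorem neg_mul_le_jointObjective (hα : 0 ≤ α) {s : ℕ} (hs : s ≤ #{i | ε ≤ |x i|}) :
    -α * (n - s) ≤ jointObjective g α x u := by
  have hsS : (s : ℝ) ≤ #{i | ε ≤ |x i|} := by exact_mod_cast hs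
  calc -α * (n - s) ≤ -α * (n - #{i | ε ≤ |x i|}) := by nlinarith
    _ = ∑ i, (if ε ≤ |x i| then 0 else -α) := (sum_ite_eq_neg_mul x α ε).symm
    _ ≤ jointObjective g α x u := sum_ite_le_jointObjective hdec h1 hlip hu hα

theorem l0norm_eq_of_jointObjective_le (hα : 0 < α) (hε : 0 < ε) {s : ℕ}
    (hs : s ≤ #{i | ε ≤ |x i|}) (hJ : jointObjective g α x u ≤ -α * (n - s)) :
    l0norm x = s := by
  set S : Finset (Fin n) := {i | ε ≤ |x i|}
  have hlow := sum_ite_le_jointObjective (x := x) hdec h1 hlip hu hα.le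
  rw [sum_ite_eq_neg_mul] at hlow
  have hSs : #S = s := by
    have : (#S : ℝ) ≤ s := by nlinarith
    exact le_antisymm (by exact_mod_cast this) hs
  have hterm : ∀ i, u i * |x i| + α * g i (u i) = if ε ≤ |x i| then 0 else -α := by
    have hle i (_ : i ∈ univ) := ite_le_mul_abs_add_mul (a := x i) hα.le (hdec i) (h1 i) (hu i)
      (hlip i _ (hu i))
    have hsum : ∑ i, (if ε ≤ |x i| then 0 else -α) = ∑ i, (u i * |x i| + α * g i (u i)) := by
      rw [← jointObjective_eq_sum, sum_ite_eq_neg_mul]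
      exact le_antisymm hlow (hJ.trans_eq (by rw [hSs]))
    exact fun i => ((sum_eq_sum_iff_of_le hle).1 hsum i (mem_univ i)).symm
  have hsupp : ({i | x i ≠ 0} : Finset (Fin n)) = S := by
    ext i
    simp only [S, mem_filter, mem_univ, true_and]
    refine ⟨fun hx => ?_, fun hεx hx => by simp [hx] at hεx; linarith⟩
    by_contra hεx
    have hi := hterm i
    rw [if_neg hεx] at hi
    exact hx (eq_zero_of_mul_abs_add_mul_eq_neg hα (hdec i) (h1 i) (hu i) hi)
  rw [l0norm, hsupp, hSs]

end Joint

theorem typeB_exact_recovery_general {m n : ℕ} (A : Matrix (Fin m) (Fin n) ℝ) (b : Fin m → ℝ)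
    (g : Fin n → ℝ → ℝ)
    (hdiff : ∀ i, DifferentiableOn ℝ (g i) (Set.Icc 0 1))
    (hbdd : ∀ i, ∃ M : ℝ, ∀ t ∈ Set.Icc (0 : ℝ) 1,
      |derivWithin (g i) (Set.Icc 0 1) t| ≤ M)
    (hdec : ∀ i, StrictAntiOn (g i) (Set.Icc 0 1))
    (h0 : ∀ i, g i 0 = 0) (h1 : ∀ i, g i 1 = -1)
    (s : ℕ)
    (hs : IsLeast {k : ℕ | ∃ x : Fin n → ℝ, A.mulVec x = b ∧ l0norm x = k} s)
    (ε₀ : ℝ) (hε₀ : IsGLB ((fun x => sthLargest x s) '' {x : Fin n → ℝ | A.mulVec x = b}) ε₀)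
    (hε₀pos : 0 < ε₀) :
    ∃ α > (0 : ℝ),
      -- (a) every minimizer (x*, u*) of the joint problem has ‖x*‖₀ = s
      (∀ x u : Fin n → ℝ, A.mulVec x = b → (∀ i, u i ∈ Set.Icc (0 : ℝ) 1) →
        (∀ x' u' : Fin n → ℝ, A.mulVec x' = b → (∀ i, u' i ∈ Set.Icc (0 : ℝ) 1) →
          (∑ i, u i * |x i|) + α * ∑ i, g i (u i) ≤
            (∑ i, u' i * |x' i|) + α * ∑ i, g i (u' i)) →
        l0norm x = s) ∧
      -- (b) conversely, every s-sparse feasible x* together with the indicator weights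
      -- u*_i = 1 if x*_i = 0, u*_i = 0 otherwise, is a minimizer with value -α(n-s)
      (∀ x : Fin n → ℝ, A.mulVec x = b → l0norm x = s →
        (∀ i, (if x i = 0 then (1 : ℝ) else 0) ∈ Set.Icc (0 : ℝ) 1) ∧
        (∀ x' u' : Fin n → ℝ, A.mulVec x' = b → (∀ i, u' i ∈ Set.Icc (0 : ℝ) 1) →
          (∑ i, (if x i = 0 then (1 : ℝ) else 0) * |x i|) +
              α * ∑ i, g i (if x i = 0 then (1 : ℝ) else 0) ≤
            (∑ i, u' i * |x' i|) + α * ∑ i, g i (u' i)) ∧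
        (∑ i, (if x i = 0 then (1 : ℝ) else 0) * |x i|) +
            α * ∑ i, g i (if x i = 0 then (1 : ℝ) else 0) = -α * ((n : ℝ) - s)) := by
  obtain ⟨L, hL, hgL⟩ := exists_pos_forall_neg_mul_le hdiff hbdd h0
  set ε := ε₀ / 2
  have hε : 0 < ε := half_pos hε₀pos
  set α := ε / L
  have hα : 0 < α := div_pos hε hL
  have hαL : α * L = ε := div_mul_cancel₀ ε hL.ne'
  have hlip (i) (t) (ht : t ∈ Set.Icc (0 : ℝ) 1) : -(ε * t) ≤ α * g i t :=
    calc -(ε * t) = α * -(L * t) := by rw [mul_neg, ← mul_assoc, hαL]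
      _ ≤ α * g i t := mul_le_mul_of_nonneg_left (hgL i t ht) hα.le
  have hthresh (x : Fin n → ℝ) (hx : A.mulVec x = b) : s ≤ #{i | ε ≤ |x i|} :=
    le_card_filter_le_abs_of_lt_sthLargest hε.le
      ((half_lt_self hε₀pos).trans_le (hε₀.1 ⟨x, hx, rfl⟩))
  have hvalue (x : Fin n → ℝ) (hx : l0norm x = s) :
      jointObjective g α x (zeroIndicator x) = -α * (n - s) :=
    hx ▸ jointObjective_zeroIndicator h0 h1
  refine ⟨α, hα, fun x u hx hu hmin => ?_, fun x hx hxs =>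
    ⟨zeroIndicator_mem_Icc x, fun x' u' hx' hu' => ?_, hvalue x hxs⟩⟩
  · obtain ⟨x₀, hx₀, hx₀s⟩ := hs.1
    refine l0norm_eq_of_jointObjective_le hdec h1 hlip hu hα hε (hthresh x hx) ?_
    exact (hmin x₀ _ hx₀ (zeroIndicator_mem_Icc x₀)).trans_eq (hvalue x₀ hx₀s)
  · exact (hvalue x hxs).trans_le
      (neg_mul_le_jointObjective hdec h1 hlip hu' hα.le (hthresh x' hx'))

/-- Exact recovery for Type B lifting functions: for `U = [0,1]^n` and `g` separable with each
`g_i` having bounded derivative on `[0,1]`, strictly decreasing, `g_i(0) = 0`, `g_i(1) = -1`,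
there exists `α > 0` such that the joint minimization
`min_{Ax = b, u ∈ U} (⟨u, |x|⟩ + α g(u))` is equivalent to `min_{Ax = b} ‖x‖₀`. -/
theorem typeB_exact_recovery {m n : ℕ} (A : Matrix (Fin m) (Fin n) ℝ) (b : Fin m → ℝ)
    (g : Fin n → ℝ → ℝ)
    (hdiff : ∀ i, DifferentiableOn ℝ (g i) (Set.Icc 0 1))
    (hbdd : ∀ i, ∃ M : ℝ, ∀ t ∈ Set.Icc (0 : ℝ) 1,
      |derivWithin (g i) (Set.Icc 0 1) t| ≤ M)
    (hdec : ∀ i, StrictAntiOn (g i) (Set.Icc 0 1))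
    (h0 : ∀ i, g i 0 = 0) (h1 : ∀ i, g i 1 = -1)
    (s : ℕ) (hspos : 0 < s) (hsn : s ≤ n)
    (hs : IsLeast {k : ℕ | ∃ x : Fin n → ℝ, A.mulVec x = b ∧ l0norm x = k} s)
    (ε₀ : ℝ) (hε₀ : IsGLB ((fun x => sthLargest x s) '' {x : Fin n → ℝ | A.mulVec x = b}) ε₀)
    (hε₀pos : 0 < ε₀) :
    ∃ α > (0 : ℝ),
      -- (a) every minimizer (x*, u*) of the joint problem has ‖x*‖₀ = s
      (∀ x u : Fin n → ℝ, A.mulVec x = b → (∀ i, u i ∈ Set.Icc (0 : ℝ) 1) →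
        (∀ x' u' : Fin n → ℝ, A.mulVec x' = b → (∀ i, u' i ∈ Set.Icc (0 : ℝ) 1) →
          (∑ i, u i * |x i|) + α * ∑ i, g i (u i) ≤
            (∑ i, u' i * |x' i|) + α * ∑ i, g i (u' i)) →
        l0norm x = s) ∧
      -- (b) conversely, every s-sparse feasible x* together with the indicator weights
      -- u*_i = 1 if x*_i = 0, u*_i = 0 otherwise, is a minimizer with value -α(n-s)
      (∀ x : Fin n → ℝ, A.mulVec x = b → l0norm x = s →
        (∀ i, (if x i = 0 then (1 : ℝ) else 0) ∈ Set.Icc (0 : ℝ) 1) ∧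
        (∀ x' u' : Fin n → ℝ, A.mulVec x' = b → (∀ i, u' i ∈ Set.Icc (0 : ℝ) 1) →
          (∑ i, (if x i = 0 then (1 : ℝ) else 0) * |x i|) +
              α * ∑ i, g i (if x i = 0 then (1 : ℝ) else 0) ≤
            (∑ i, u' i * |x' i|) + α * ∑ i, g i (u' i)) ∧
        (∑ i, (if x i = 0 then (1 : ℝ) else 0) * |x i|) +
            α * ∑ i, g i (if x i = 0 then (1 : ℝ) else 0) = -α * ((n : ℝ) - s)) :=
  typeB_exact_recovery_general A b g hdiff hbdd hdec h0 h1 s hs ε₀ hε₀ hε₀pos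
end

section
/- Let A ∈ ℝ^{m×n} and b ∈ ℝ^m with Ω = {x ∈ ℝ^n : A x = b} nonempty, let s := min{‖x‖_0 : x ∈ Ω} and ε_0 := inf{|x|_{(s)} : x ∈ Ω} > 0, where |x|_{(s)} is the s-th largest component of |x|. Let U = [0,∞)^n and g(u) = Σ_{i=1}^n g_i(u_i), where each g_i : [0,∞) → ℝ is convex and differentiable on [0,∞), g_i(0) = 0, and each g_i attains its minimum value -1 at some point d_i > 0 (a Type C function with a = 0, b = -1 after normalization). Then there exists α > 0 such that the joint minimization min_{x ∈ Ω, u ∈ U} (⟨u, |x|⟩ + α g(u)) is equivalent to min_{x ∈ Ω} ‖x‖_0: every minimizer (x*, u*) of the joint problem has ‖x*‖_0 = s, and conversely every s-sparse x* ∈ Ω extends to a minimizer of the joint problem with minimum value -α(n - s). -/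
lemma card_ge_of_le_sthLargest {n s : ℕ} (x : Fin n → ℝ) (ε₀ : ℝ) (hε : 0 < ε₀)
    (hsn : s ≤ n) (h : ε₀ ≤ sthLargest x s) :
    s ≤ (Finset.univ.filter fun i => ε₀ ≤ |x i|).card := by
  by_contra hlt
  push_neg at hlt
  set E : Finset ℝ :=
    insert (ε₀/2) ((Finset.univ.filter fun i : Fin n => |x i| < ε₀).image fun i => |x i|) with hE
  have hEne : E.Nonempty := ⟨ε₀/2, Finset.mem_insert_self _ _⟩
  set t₀ := E.max' hEne with ht₀
  have ht₀lt : t₀ < ε₀ := by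
    rw [ht₀, Finset.max'_lt_iff]
    intro y hy
    rcases Finset.mem_insert.1 hy with rfl | hy
    · linarith
    · obtain ⟨i, hi, rfl⟩ := Finset.mem_image.1 hy
      exact (Finset.mem_filter.1 hi).2
  have hub : ∀ t ∈ {t : ℝ | s ≤ (Finset.univ.filter fun i => t ≤ |x i|).card}, t ≤ t₀ := by
    intro t ht
    simp only [Set.mem_setOf_eq] at ht
    have hns : ¬ (Finset.univ.filter fun i => t ≤ |x i|) ⊆
        (Finset.univ.filter fun i => ε₀ ≤ |x i|) := by
      intro hsub
      exact absurd (ht.trans (Finset.card_le_card hsub)) (not_le.2 hlt)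
    obtain ⟨i, hiA, hiB⟩ := Finset.not_subset.1 hns
    have h1 : t ≤ |x i| := (Finset.mem_filter.1 hiA).2
    have h2 : |x i| < ε₀ := by
      by_contra h'
      push_neg at h'
      exact hiB (Finset.mem_filter.2 ⟨Finset.mem_univ i, h'⟩)
    have hmem : |x i| ∈ E :=
      Finset.mem_insert_of_mem
        (Finset.mem_image_of_mem _ (Finset.mem_filter.2 ⟨Finset.mem_univ i, h2⟩))
    exact h1.trans (Finset.le_max' _ _ hmem)
  have hne : (0:ℝ) ∈ {t : ℝ | s ≤ (Finset.univ.filter fun i => t ≤ |x i|).card} := by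
    simp only [Set.mem_setOf_eq]
    have heq : (Finset.univ.filter fun i : Fin n => (0:ℝ) ≤ |x i|) = Finset.univ := by
      apply Finset.filter_true_of_mem
      intro i _
      exact abs_nonneg _
    rw [heq, Finset.card_univ, Fintype.card_fin]
    exact hsn
  have : sthLargest x s ≤ t₀ := csSup_le ⟨0, hne⟩ hub
  linarith

lemma tangent_lb {g : ℝ → ℝ} (hconv : ConvexOn ℝ (Set.Ici 0) g)
    (hdiff : DifferentiableOn ℝ g (Set.Ici 0)) (h0 : g 0 = 0) {u : ℝ} (hu : 0 ≤ u) :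
    derivWithin g (Set.Ici 0) 0 * u ≤ g u := by
  rcases hu.eq_or_lt with heq | hpos
  · rw [← heq, mul_zero, h0]
  · have hs := hconv.derivWithin_le_slope Set.self_mem_Ici (Set.mem_Ici.2 hu) hpos
      (hdiff 0 Set.self_mem_Ici)
    rw [slope_def_field, h0, sub_zero, sub_zero] at hs
    calc derivWithin g (Set.Ici 0) 0 * u ≤ (g u / u) * u :=
          mul_le_mul_of_nonneg_right hs hu
      _ = g u := div_mul_cancel₀ _ hpos.ne'


/-- Exact recovery for Type C lifting functions: for `U = [0,∞)^n` and `g` separable with each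
`g_i` convex and differentiable on `[0,∞)`, `g_i(0) = 0`, attaining its minimum value `-1` at
some `d_i > 0`, there exists `α > 0` such that the joint minimization
`min_{Ax = b, u ∈ U} (⟨u, |x|⟩ + α g(u))` is equivalent to `min_{Ax = b} ‖x‖₀`. -/
theorem typeC_exact_recovery {m n : ℕ} (A : Matrix (Fin m) (Fin n) ℝ) (b : Fin m → ℝ)
    (g : Fin n → ℝ → ℝ)
    (hconv : ∀ i, ConvexOn ℝ (Set.Ici 0) (g i))
    (hdiff : ∀ i, DifferentiableOn ℝ (g i) (Set.Ici 0))
    (h0 : ∀ i, g i 0 = 0)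
    (hmin : ∀ i, ∃ d > (0 : ℝ), g i d = -1 ∧ ∀ t ∈ Set.Ici (0 : ℝ), -1 ≤ g i t)
    (s : ℕ) (hspos : 0 < s) (hsn : s ≤ n)
    (hs : IsLeast {k : ℕ | ∃ x : Fin n → ℝ, A.mulVec x = b ∧ l0norm x = k} s)
    (ε₀ : ℝ) (hε₀ : IsGLB ((fun x => sthLargest x s) '' {x : Fin n → ℝ | A.mulVec x = b}) ε₀)
    (hε₀pos : 0 < ε₀) :
    ∃ α > (0 : ℝ),
      -- every minimizer (x*, u*) of the joint problem has ‖x*‖₀ = s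
      (∀ x u : Fin n → ℝ, A.mulVec x = b → (∀ i, 0 ≤ u i) →
        (∀ x' u' : Fin n → ℝ, A.mulVec x' = b → (∀ i, 0 ≤ u' i) →
          (∑ i, u i * |x i|) + α * ∑ i, g i (u i) ≤
            (∑ i, u' i * |x' i|) + α * ∑ i, g i (u' i)) →
        l0norm x = s) ∧
      -- every s-sparse feasible x* extends to a minimizer with value -α(n-s)
      (∀ x : Fin n → ℝ, A.mulVec x = b → l0norm x = s →
        ∃ u : Fin n → ℝ, (∀ i, 0 ≤ u i) ∧
          (∀ x' u' : Fin n → ℝ, A.mulVec x' = b → (∀ i, 0 ≤ u' i) →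
            (∑ i, u i * |x i|) + α * ∑ i, g i (u i) ≤
              (∑ i, u' i * |x' i|) + α * ∑ i, g i (u' i)) ∧
          (∑ i, u i * |x i|) + α * ∑ i, g i (u i) = -α * ((n : ℝ) - s)) := by
  choose d hd hgd hglb using hmin
  set c : Fin n → ℝ := fun i => derivWithin (g i) (Set.Ici 0) 0 with hc
  set L : ℝ := 1 + ∑ i, max 0 (-(c i)) with hLdef
  have hsum_nonneg : (0:ℝ) ≤ ∑ i, max 0 (-(c i)) :=
    Finset.sum_nonneg fun i _ => le_max_left _ _
  have hLpos : 0 < L := by rw [hLdef]; linarith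
  have hLc : ∀ i, -(c i) ≤ L := by
    intro i
    have h1 : max 0 (-(c i)) ≤ ∑ j, max 0 (-(c j)) :=
      Finset.single_le_sum (f := fun j => max (0:ℝ) (-(c j)))
        (fun j _ => le_max_left 0 _) (Finset.mem_univ i)
    have h2 := le_max_right 0 (-(c i))
    rw [hLdef]; linarith
  set α : ℝ := ε₀ / L with hαdef
  have hα : 0 < α := div_pos hε₀pos hLpos
  have hαL : α * L = ε₀ := div_mul_cancel₀ _ hLpos.ne'
  -- per-term bounds
  have htan : ∀ i (u : ℝ), 0 ≤ u → c i * u ≤ g i u :=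
    fun i u hu => tangent_lb (hconv i) (hdiff i) (h0 i) hu
  have hterm_lb : ∀ i (u t : ℝ), 0 ≤ u → 0 ≤ t → -α ≤ u * t + α * g i u := by
    intro i u t hu ht
    have h1 : -1 ≤ g i u := hglb i u (Set.mem_Ici.2 hu)
    nlinarith [mul_nonneg hu ht]
  have hterm_big : ∀ i (u t : ℝ), 0 ≤ u → ε₀ ≤ t → 0 ≤ u * t + α * g i u := by
    intro i u t hu ht
    have h1 : c i * u ≤ g i u := htan i u hu
    have h2 : -L ≤ c i := by linarith [hLc i]
    nlinarith [mul_le_mul_of_nonneg_left h1 hα.le,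
      mul_le_mul_of_nonneg_left (mul_le_mul_of_nonneg_right h2 hu) hα.le,
      mul_le_mul_of_nonneg_left ht hu]
  have hterm_strict : ∀ i (u t : ℝ), 0 ≤ u → 0 < t → -α < u * t + α * g i u := by
    intro i u t hu ht
    rcases hu.eq_or_lt with heq | hpos
    · rw [← heq, zero_mul, h0 i, mul_zero, add_zero]; linarith
    · have h1 : -1 ≤ g i u := hglb i u (Set.mem_Ici.2 hu)
      nlinarith [mul_pos hpos ht]
  -- rewriting the objective
  have hF : ∀ (y v : Fin n → ℝ),
      (∑ i, v i * |y i|) + α * ∑ i, g i (v i) = ∑ i, (v i * |y i| + α * g i (v i)) := by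
    intro y v
    rw [Finset.mul_sum, ← Finset.sum_add_distrib]
  -- number of large entries for feasible points
  have hcards : ∀ x' : Fin n → ℝ, A.mulVec x' = b →
      ((Finset.univ.filter fun i => ¬ ε₀ ≤ |x' i|).card : ℝ) ≤ (n:ℝ) - s := by
    intro x' hx'
    have hS : s ≤ (Finset.univ.filter fun i => ε₀ ≤ |x' i|).card :=
      card_ge_of_le_sthLargest x' ε₀ hε₀pos hsn (hε₀.1 ⟨x', hx', rfl⟩)
    have hcc := Finset.card_filter_add_card_filter_not
      (s := (Finset.univ : Finset (Fin n))) (p := fun i => ε₀ ≤ |x' i|)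
    have hcu : (Finset.univ : Finset (Fin n)).card = n := by simp
    have : (Finset.univ.filter fun i => ¬ ε₀ ≤ |x' i|).card + s ≤ n := by omega
    have := (Nat.cast_le (α := ℝ)).2 this
    push_cast at this
    linarith
  -- lower bound on the objective for any feasible pair
  have hlow : ∀ x' u' : Fin n → ℝ, A.mulVec x' = b → (∀ i, 0 ≤ u' i) →
      -α * ((n:ℝ) - s) ≤ ∑ i, (u' i * |x' i| + α * g i (u' i)) := by
    intro x' u' hx' hu'
    rw [← Finset.sum_filter_add_sum_filter_not Finset.univ (fun i => ε₀ ≤ |x' i|)]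
    have h1 : 0 ≤ ∑ i ∈ Finset.univ.filter fun i => ε₀ ≤ |x' i|,
        (u' i * |x' i| + α * g i (u' i)) :=
      Finset.sum_nonneg fun i hi =>
        hterm_big i (u' i) (|x' i|) (hu' i) (Finset.mem_filter.1 hi).2
    have h2 : ((Finset.univ.filter fun i => ¬ ε₀ ≤ |x' i|).card : ℝ) * (-α) ≤
        ∑ i ∈ Finset.univ.filter fun i => ¬ ε₀ ≤ |x' i|,
          (u' i * |x' i| + α * g i (u' i)) := by
      have := Finset.card_nsmul_le_sum (Finset.univ.filter fun i => ¬ ε₀ ≤ |x' i|)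
        (fun i => u' i * |x' i| + α * g i (u' i)) (-α)
        (fun i _ => hterm_lb i (u' i) (|x' i|) (hu' i) (abs_nonneg _))
      rwa [nsmul_eq_mul] at this
    have h3 := hcards x' hx'
    nlinarith
  -- value of the canonical lift at an s-sparse point
  have hval : ∀ x : Fin n → ℝ, l0norm x = s →
      (∑ i, (if x i = 0 then d i else 0) * |x i|) +
        α * ∑ i, g i (if x i = 0 then d i else 0) = -α * ((n:ℝ) - s) := by
    intro x hxs
    have h2 : (Finset.univ.filter fun i => ¬ x i = 0).card = s := by
      have := hxs
      unfold l0norm at this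
      simpa [ne_eq] using this
    have hcc := Finset.card_filter_add_card_filter_not
      (s := (Finset.univ : Finset (Fin n))) (p := fun i => x i = 0)
    have hcu : (Finset.univ : Finset (Fin n)).card = n := by simp
    have hc0 : (Finset.univ.filter fun i => x i = 0).card = n - s := by omega
    rw [hF]
    have h1 : ∀ i : Fin n,
        ((if x i = 0 then d i else 0) * |x i| + α * g i (if x i = 0 then d i else 0))
          = if x i = 0 then -α else 0 := by
      intro i
      split_ifs with h
      · rw [h, abs_zero, mul_zero, hgd i, zero_add]; ring
      · rw [zero_mul, h0 i, mul_zero, zero_add]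
    rw [Finset.sum_congr rfl (fun i _ => h1 i), Finset.sum_ite, Finset.sum_const,
      Finset.sum_const_zero, add_zero, nsmul_eq_mul, hc0, Nat.cast_sub hsn]
    ring
  refine ⟨α, hα, ?_, ?_⟩
  · -- part 1
    intro x u hx hu hopt
    obtain ⟨x₀, hx₀b, hx₀s⟩ := hs.1
    have hu₀ : ∀ i, 0 ≤ (fun i => if x₀ i = 0 then d i else 0) i := by
      intro i
      by_cases h : x₀ i = 0 <;> simp [h, (hd _).le]
    have hopt1 : ∑ i, (u i * |x i| + α * g i (u i)) ≤ -α * ((n:ℝ) - s) := by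
      have h' := hopt x₀ (fun i => if x₀ i = 0 then d i else 0) hx₀b hu₀
      rw [hF] at h'
      calc ∑ i, (u i * |x i| + α * g i (u i)) ≤ _ := h'
        _ = -α * ((n:ℝ) - s) := hval x₀ hx₀s
    -- no small nonzero entries
    have hkey : ∀ i, x i ≠ 0 → ε₀ ≤ |x i| := by
      intro i₀ hne
      by_contra hlt
      push_neg at hlt
      have hmem : i₀ ∈ Finset.univ.filter fun i => ¬ ε₀ ≤ |x i| :=
        Finset.mem_filter.2 ⟨Finset.mem_univ _, not_le.2 hlt⟩
      have h1 : 0 ≤ ∑ i ∈ Finset.univ.filter fun i => ε₀ ≤ |x i|,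
          (u i * |x i| + α * g i (u i)) :=
        Finset.sum_nonneg fun i hi =>
          hterm_big i (u i) (|x i|) (hu i) (Finset.mem_filter.1 hi).2
      have h2 : (((Finset.univ.filter fun i => ¬ ε₀ ≤ |x i|).erase i₀).card : ℝ) * (-α) ≤
          ∑ i ∈ (Finset.univ.filter fun i => ¬ ε₀ ≤ |x i|).erase i₀,
            (u i * |x i| + α * g i (u i)) := by
        have := Finset.card_nsmul_le_sum ((Finset.univ.filter fun i => ¬ ε₀ ≤ |x i|).erase i₀)
          (fun i => u i * |x i| + α * g i (u i)) (-α)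
          (fun i _ => hterm_lb i (u i) (|x i|) (hu i) (abs_nonneg _))
        rwa [nsmul_eq_mul] at this
      have h3 : -α < u i₀ * |x i₀| + α * g i₀ (u i₀) :=
        hterm_strict i₀ (u i₀) (|x i₀|) (hu i₀) (abs_pos.2 hne)
      have h4 : (∑ i ∈ (Finset.univ.filter fun i => ¬ ε₀ ≤ |x i|).erase i₀,
            (u i * |x i| + α * g i (u i))) + (u i₀ * |x i₀| + α * g i₀ (u i₀)) =
          ∑ i ∈ Finset.univ.filter fun i => ¬ ε₀ ≤ |x i|,
            (u i * |x i| + α * g i (u i)) :=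
        Finset.sum_erase_add _ _ hmem
      have h5 := Finset.sum_filter_add_sum_filter_not Finset.univ (fun i => ε₀ ≤ |x i|)
        (fun i => u i * |x i| + α * g i (u i))
      have hone : 1 ≤ (Finset.univ.filter fun i => ¬ ε₀ ≤ |x i|).card :=
        Finset.card_pos.2 ⟨i₀, hmem⟩
      have hce : (((Finset.univ.filter fun i => ¬ ε₀ ≤ |x i|).erase i₀).card : ℝ) =
          ((Finset.univ.filter fun i => ¬ ε₀ ≤ |x i|).card : ℝ) - 1 := by
        rw [Finset.card_erase_of_mem hmem, Nat.cast_sub hone, Nat.cast_one]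
      have h6 := hcards x hx
      nlinarith
    -- the support equals the large-entry set
    have hSeq : (Finset.univ.filter fun i => ε₀ ≤ |x i|) =
        (Finset.univ.filter fun i => x i ≠ 0) := by
      ext i
      simp only [Finset.mem_filter, Finset.mem_univ, true_and]
      constructor
      · intro h hxi
        rw [hxi, abs_zero] at h
        linarith
      · exact hkey i
    have h1 : 0 ≤ ∑ i ∈ Finset.univ.filter fun i => ε₀ ≤ |x i|,
        (u i * |x i| + α * g i (u i)) :=
      Finset.sum_nonneg fun i hi =>
        hterm_big i (u i) (|x i|) (hu i) (Finset.mem_filter.1 hi).2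
    have h2 : ((Finset.univ.filter fun i => ¬ ε₀ ≤ |x i|).card : ℝ) * (-α) ≤
        ∑ i ∈ Finset.univ.filter fun i => ¬ ε₀ ≤ |x i|,
          (u i * |x i| + α * g i (u i)) := by
      have := Finset.card_nsmul_le_sum (Finset.univ.filter fun i => ¬ ε₀ ≤ |x i|)
        (fun i => u i * |x i| + α * g i (u i)) (-α)
        (fun i _ => hterm_lb i (u i) (|x i|) (hu i) (abs_nonneg _))
      rwa [nsmul_eq_mul] at this
    have h5 := Finset.sum_filter_add_sum_filter_not Finset.univ (fun i => ε₀ ≤ |x i|)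
      (fun i => u i * |x i| + α * g i (u i))
    -- from bounds: (n - s) ≤ card of complement
    have hns_le : (n:ℝ) - s ≤ ((Finset.univ.filter fun i => ¬ ε₀ ≤ |x i|).card : ℝ) := by
      by_contra h'
      rw [not_le] at h'
      have := mul_lt_mul_of_neg_right h' (neg_lt_zero.2 hα)
      linarith
    have hcc := Finset.card_filter_add_card_filter_not
      (s := (Finset.univ : Finset (Fin n))) (p := fun i => ε₀ ≤ |x i|)
    have hcu : (Finset.univ : Finset (Fin n)).card = n := by simp
    have hcard_le : (Finset.univ.filter fun i => ε₀ ≤ |x i|).card ≤ s := by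
      have h7 : ((Finset.univ.filter fun i => ε₀ ≤ |x i|).card : ℝ) ≤ (s:ℝ) := by
        have h8 : ((Finset.univ.filter fun i => ε₀ ≤ |x i|).card : ℝ) +
            ((Finset.univ.filter fun i => ¬ ε₀ ≤ |x i|).card : ℝ) = (n:ℝ) := by
          exact_mod_cast congrArg (Nat.cast (R := ℝ)) (hcc.trans hcu)
        linarith
      exact_mod_cast h7
    have hl0 : l0norm x = (Finset.univ.filter fun i => ε₀ ≤ |x i|).card := by
      rw [hSeq]; rfl
    have hge : s ≤ l0norm x := hs.2 ⟨x, hx, rfl⟩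
    omega
  · -- part 2
    intro x hxb hxs
    refine ⟨fun i => if x i = 0 then d i else 0, ?_, ?_, ?_⟩
    · intro i
      by_cases h : x i = 0 <;> simp [h, (hd _).le]
    · intro x' u' hx' hu'
      calc (∑ i, (if x i = 0 then d i else 0) * |x i|) +
            α * ∑ i, g i (if x i = 0 then d i else 0)
          = -α * ((n:ℝ) - s) := hval x hxs
        _ ≤ ∑ i, (u' i * |x' i| + α * g i (u' i)) := hlow x' u' hx' hu'
        _ = (∑ i, u' i * |x' i|) + α * ∑ i, g i (u' i) := (hF x' u').symm
    · exact hval x hxs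
end

section
/- Consider ADMM for the unconstrained lifted ℓ1 problem with ψ(y) = (γ/2)‖A y - b‖_2² where A ∈ ℝ^{m×n}, b ∈ ℝ^m, γ > 0, ρ > 0, and set C_A := ‖AᵀA‖_2 (the spectral norm). Suppose the sequence (u^k, x^k, y^k, v^k) satisfies for every k: y^{k+1} = argmin_y ψ(y) + (ρ/2)‖y - (x^{k+1} + v^k/ρ)‖_2² (equivalently (ρ I + γ AᵀA) y^{k+1} = ρ x^{k+1} + v^k + γ Aᵀb) and v^{k+1} = v^k + ρ(x^{k+1} - y^{k+1}). Then v^{k+1} = ∇ψ(y^{k+1}) = γ Aᵀ(A y^{k+1} - b) for every k ≥ 0, and for every k ≥ 1, ‖x^{k+1} - y^{k+1}‖_2 ≤ (γ C_A / ρ) ‖y^{k+1} - y^k‖_2. -/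
/-! The optimality condition of the `y`-update, `ρy^{k+1} + γAᵀAy^{k+1} = ρx^{k+1} + v^k + γAᵀb`,
and the dual update `v^{k+1} - v^k = ρ(x^{k+1} - y^{k+1})` together give
`v^{k+1} = γ(AᵀAy^{k+1} - Aᵀb)`. Subtracting this at two consecutive steps yields
`ρ(x^{k+1} - y^{k+1}) = γAᵀA(y^{k+1} - y^k)`, and the residual bound is the operator-norm
estimate for `AᵀA`. -/

/-- The Euclidean (ℓ2) norm of a vector. -/
noncomputable def l2norm {k : ℕ} (z : Fin k → ℝ) : ℝ :=
  Real.sqrt (∑ i, z i ^ 2)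

/-- The spectral (ℓ2 operator) norm of a square matrix. -/
noncomputable def specNorm {k : ℕ} (M : Matrix (Fin k) (Fin k) ℝ) : ℝ :=
  sSup {c : ℝ | ∃ y : Fin k → ℝ, l2norm y = 1 ∧ c = l2norm (M.mulVec y)}

open Matrix

section ADMM

variable {𝕜 E : Type*} [Field 𝕜] [AddCommGroup E] [Module 𝕜 E]

theorem dual_update_eq_gradient {ρ γ : 𝕜} {x y v v' g c : E}
    (hy : ρ • y + γ • g = ρ • x + v + γ • c) (hv : v' = v + ρ • (x - y)) :
    v' = γ • (g - c) := by
  rw [hv]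
  linear_combination (norm := module) -hy

theorem primal_residual_eq_smul_dual_step {ρ : 𝕜} (hρ : ρ ≠ 0) {x y v v' : E}
    (hv : v' = v + ρ • (x - y)) :
    x - y = ρ⁻¹ • (v' - v) := by
  rw [hv, add_sub_cancel_left, smul_smul, inv_mul_cancel₀ hρ, one_smul]

end ADMM

section EuclideanNorm

variable {k : ℕ}

theorem l2norm_eq_norm_toLp (z : Fin k → ℝ) : l2norm z = ‖WithLp.toLp 2 z‖ := by
  simp [l2norm, EuclideanSpace.norm_eq, sq_abs]

theorem l2norm_smul (c : ℝ) (z : Fin k → ℝ) : l2norm (c • z) = |c| * l2norm z := by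
  rw [l2norm_eq_norm_toLp, l2norm_eq_norm_toLp, WithLp.toLp_smul, norm_smul, Real.norm_eq_abs]

theorem l2norm_mulVec_le_of_forall_unit {p : ℕ} (M : Matrix (Fin p) (Fin k) ℝ) {C : ℝ}
    (hC : ∀ y, l2norm y = 1 → l2norm (M *ᵥ y) ≤ C) (z : Fin k → ℝ) :
    l2norm (M *ᵥ z) ≤ C * l2norm z := by
  rcases eq_or_ne z 0 with rfl | hz
  · simp [l2norm]
  have hpos : 0 < l2norm z := by simpa [l2norm_eq_norm_toLp] using hz
  have hunit : l2norm ((l2norm z)⁻¹ • z) = 1 := by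
    rw [l2norm_smul, abs_inv, abs_of_pos hpos, inv_mul_cancel₀ hpos.ne']
  calc l2norm (M *ᵥ z) = l2norm (M *ᵥ ((l2norm z)⁻¹ • z)) * l2norm z := by
        rw [mulVec_smul, l2norm_smul, abs_inv, abs_of_pos hpos]
        field_simp
    _ ≤ C * l2norm z := by gcongr; exact hC _ hunit

theorem l2norm_mulVec_le_specNorm (M : Matrix (Fin k) (Fin k) ℝ) (z : Fin k → ℝ) :
    l2norm (M *ᵥ z) ≤ specNorm M * l2norm z := by
  have hopNorm : ∀ y, l2norm y = 1 → l2norm (M *ᵥ y) ≤ ‖toEuclideanCLM (𝕜 := ℝ) M‖ := by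
    intro y hy
    rw [l2norm_eq_norm_toLp] at hy ⊢
    simpa [hy] using (toEuclideanCLM (𝕜 := ℝ) M).le_opNorm (WithLp.toLp 2 y)
  have hbdd : BddAbove {c : ℝ | ∃ y : Fin k → ℝ, l2norm y = 1 ∧ c = l2norm (M *ᵥ y)} :=
    ⟨_, by rintro c ⟨y, hy, rfl⟩; exact hopNorm y hy⟩
  exact l2norm_mulVec_le_of_forall_unit M (fun y hy => le_csSup hbdd ⟨y, hy, rfl⟩) z

end EuclideanNorm

open Matrix in
/-- ADMM for the unconstrained lifted ℓ1 problem with `ψ(y) = (γ/2)‖Ay - b‖²`: if the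
`y`-update solves `(ρI + γAᵀA) y^{k+1} = ρ x^{k+1} + v^k + γ Aᵀ b` and
`v^{k+1} = v^k + ρ(x^{k+1} - y^{k+1})`, then `v^{k+1} = ∇ψ(y^{k+1}) = γAᵀ(Ay^{k+1} - b)` for
all `k ≥ 0`, and `‖x^{k+1} - y^{k+1}‖ ≤ (γ C_A / ρ)‖y^{k+1} - y^k‖` for all `k ≥ 1`, where
`C_A = ‖AᵀA‖₂`. -/
theorem admm_dual_gradient_and_residual_bound {m n : ℕ}
    (A : Matrix (Fin m) (Fin n) ℝ) (b : Fin m → ℝ)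
    (γ ρ : ℝ) (hγ : 0 < γ) (hρ : 0 < ρ)
    (x y v : ℕ → Fin n → ℝ)
    (hyupd : ∀ k : ℕ, ρ • y (k + 1) + γ • (Aᵀ * A).mulVec (y (k + 1)) =
      ρ • x (k + 1) + v k + γ • Aᵀ.mulVec b)
    (hvupd : ∀ k : ℕ, v (k + 1) = v k + ρ • (x (k + 1) - y (k + 1))) :
    (∀ k : ℕ, v (k + 1) = γ • Aᵀ.mulVec (A.mulVec (y (k + 1)) - b)) ∧
    (∀ k : ℕ, 1 ≤ k →
      l2norm (x (k + 1) - y (k + 1)) ≤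
        γ * specNorm (Aᵀ * A) / ρ * l2norm (y (k + 1) - y k)) := by
  have hgrad (k : ℕ) : v (k + 1) = γ • ((Aᵀ * A) *ᵥ y (k + 1) - Aᵀ *ᵥ b) :=
    dual_update_eq_gradient (hyupd k) (hvupd k)
  refine ⟨fun k => by rw [hgrad, mulVec_sub, mulVec_mulVec], ?_⟩
  intro k hk
  obtain ⟨j, rfl⟩ := Nat.exists_eq_add_of_le' hk
  have hres :
      x (j + 1 + 1) - y (j + 1 + 1) = (γ / ρ) • (Aᵀ * A) *ᵥ (y (j + 1 + 1) - y (j + 1)) := by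
    rw [primal_residual_eq_smul_dual_step hρ.ne' (hvupd (j + 1)), hgrad, hgrad, ← smul_sub,
      sub_sub_sub_cancel_right, ← mulVec_sub, smul_smul, inv_mul_eq_div]
  calc l2norm (x (j + 1 + 1) - y (j + 1 + 1))
      = γ / ρ * l2norm ((Aᵀ * A) *ᵥ (y (j + 1 + 1) - y (j + 1))) := by
        rw [hres, l2norm_smul, abs_of_pos (div_pos hγ hρ)]
    _ ≤ γ / ρ * (specNorm (Aᵀ * A) * l2norm (y (j + 1 + 1) - y (j + 1))) := by
        gcongr; exact l2norm_mulVec_le_specNorm _ _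
    _ = γ * specNorm (Aᵀ * A) / ρ * l2norm (y (j + 1 + 1) - y (j + 1)) := by ring
end

section
/- For every real t and every a > 0, the infimum over u ≥ 0 of u|t| + a u - 2√(a u) is attained at u = a/(a + |t|)² and equals |t|/(a + |t|) - 1. Consequently, for x ∈ ℝ^n, with g(u) = a‖u‖_1 - 2Σ_i √(a u_i) and U = [0,∞)^n, the lifted ℓ1 regularization satisfies F^U_{g,1}(x) + n = Σ_{i=1}^n |x_i|/(a + |x_i|), i.e., F^U_{g,1} recovers the transformed ℓ1 (TL1) regularization J_a^{TL1}(x)/(a+1) = Σ_i |x_i|/(a + |x_i|) up to the additive constant n. -/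
lemma scalar_min (a t : ℝ) (ha : 0 < a) :
    (a / (a + |t|) ^ 2) * |t| + a * (a / (a + |t|) ^ 2)
        - 2 * Real.sqrt (a * (a / (a + |t|) ^ 2)) = |t| / (a + |t|) - 1 := by
  have hs : 0 < a + |t| := by positivity
  have h1 : a * (a / (a + |t|) ^ 2) = (a / (a + |t|)) ^ 2 := by
    field_simp
  rw [h1, Real.sqrt_sq (by positivity)]
  field_simp
  ring

lemma scalar_lb (a t u : ℝ) (ha : 0 < a) (hu : 0 ≤ u) :
    |t| / (a + |t|) - 1 ≤ u * |t| + a * u - 2 * Real.sqrt (a * u) := by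
  have hs : 0 < a + |t| := by positivity
  set v := Real.sqrt (a * u) with hv
  have hv2 : v ^ 2 = a * u := Real.sq_sqrt (by positivity)
  have hvnn : 0 ≤ v := Real.sqrt_nonneg _
  have heq : a * (u * (a + |t|) ^ 2 - 2 * v * (a + |t|) + a) = ((a + |t|) * v - a) ^ 2 := by
    linear_combination (-(a + |t|) ^ 2) * hv2
  have key : 0 ≤ u * (a + |t|) ^ 2 - 2 * v * (a + |t|) + a :=
    nonneg_of_mul_nonneg_right (heq ▸ sq_nonneg _) ha
  rw [div_sub_one hs.ne', div_le_iff₀ hs]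
  nlinarith [key]

/-- For every real `t` and `a > 0`, the infimum over `u ≥ 0` of `u|t| + au - 2√(au)` is
attained at `u = a/(a+|t|)²` and equals `|t|/(a+|t|) - 1`. Consequently, with
`g(u) = a‖u‖₁ - 2Σᵢ√(a uᵢ)` and `U = [0,∞)^n`,
`F^U_{g,1}(x) + n = Σᵢ |xᵢ|/(a+|xᵢ|)`, i.e. the lifted ℓ1 regularization recovers the
transformed ℓ1 (TL1) penalty `J_a^{TL1}(x)/(a+1)` up to the additive constant `n`. -/
theorem liftedL1_recovers_TL1 (a : ℝ) (ha : 0 < a) :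
    (∀ t : ℝ,
      (a / (a + |t|) ^ 2) * |t| + a * (a / (a + |t|) ^ 2)
          - 2 * Real.sqrt (a * (a / (a + |t|) ^ 2)) = |t| / (a + |t|) - 1 ∧
      (0 : ℝ) ≤ a / (a + |t|) ^ 2 ∧
      ∀ u : ℝ, 0 ≤ u →
        |t| / (a + |t|) - 1 ≤ u * |t| + a * u - 2 * Real.sqrt (a * u)) ∧
    (∀ (n : ℕ) (x : Fin n → ℝ),
      liftedL1 {u : Fin n → ℝ | ∀ i, 0 ≤ u i}
          (fun u => a * (∑ i, |u i|) - 2 * ∑ i, Real.sqrt (a * u i)) 1 x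
        + ((n : ℝ) : EReal)
      = ((∑ i, |x i| / (a + |x i|) : ℝ) : EReal)) := by
  refine ⟨fun t => ⟨scalar_min a t ha, by positivity, fun u hu => scalar_lb a t u ha hu⟩, ?_⟩
  intro n x
  set S : ℝ := ∑ i, |x i| / (a + |x i|) with hS
  have hsplit : ∀ u : Fin n → ℝ, (∀ i, 0 ≤ u i) →
      ((∑ i, u i * |x i|) + 1 * (a * (∑ i, |u i|) - 2 * ∑ i, Real.sqrt (a * u i))
        = ∑ i, (u i * |x i| + a * u i - 2 * Real.sqrt (a * u i))) := by
    intro u hu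
    rw [one_mul, show (∑ i, |u i|) = ∑ i, u i from
      Finset.sum_congr rfl fun i _ => abs_of_nonneg (hu i),
      Finset.mul_sum, Finset.mul_sum]
    rw [← Finset.sum_sub_distrib, ← Finset.sum_add_distrib]
    exact Finset.sum_congr rfl fun i _ => by ring
  have hSn : S - (n : ℝ) = ∑ i, (|x i| / (a + |x i|) - 1) := by
    rw [Finset.sum_sub_distrib, Finset.sum_const, Finset.card_univ, Fintype.card_fin]
    simp [hS]
  have key : liftedL1 {u : Fin n → ℝ | ∀ i, 0 ≤ u i}
      (fun u => a * (∑ i, |u i|) - 2 * ∑ i, Real.sqrt (a * u i)) 1 x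
      = ((S - n : ℝ) : EReal) := by
    unfold liftedL1
    apply le_antisymm
    · have hmem : (fun i => a / (a + |x i|) ^ 2) ∈ {u : Fin n → ℝ | ∀ i, 0 ≤ u i} :=
        fun i => by positivity
      refine le_trans (iInf₂_le _ hmem) ?_
      rw [EReal.coe_le_coe_iff, hsplit _ hmem, hSn]
      exact le_of_eq (Finset.sum_congr rfl fun i _ => scalar_min a (x i) ha)
    · refine le_iInf₂ fun u hu => ?_
      rw [EReal.coe_le_coe_iff, hsplit u hu, hSn]
      exact Finset.sum_le_sum fun i _ => scalar_lb a (x i) (u i) ha (hu i)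
  rw [key, ← EReal.coe_add]
  norm_num
end

section
/- For every real t and every a > 0, the minimum over u ∈ [0,1] of u|t| - a u equals min(|t|, a) - a, attained at u = 1 when |t| ≤ a and at u = 0 when |t| ≥ a. Consequently, for x ∈ ℝ^n, with g(u) = -a‖u‖_1 and U = [0,1]^n, the lifted ℓ1 regularization satisfies F^U_{g,1}(x) + a n = Σ_{i=1}^n min(|x_i|, a), i.e., F^U_{g,1} recovers the capped ℓ1 (CL1) regularization J_a^{CL1}(x) = Σ_i min(|x_i|, a) up to the additive constant a n. -/
lemma comb {n : ℕ} (a : ℝ) (f g : Fin n → ℝ) {x : Fin n → ℝ} :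
    (∑ i, f i * |x i|) + 1 * (-a * ∑ i, g i) = ∑ i, (f i * |x i| - a * g i) := by
  rw [Finset.sum_sub_distrib, ← Finset.mul_sum]; ring

lemma key_pt (a t u : ℝ) (hu : u ∈ Set.Icc (0 : ℝ) 1) :
    min |t| a - a ≤ u * |t| - a * u := by
  obtain ⟨h0, h1⟩ := hu
  rcases le_total |t| a with h | h
  · rw [min_eq_left h]; nlinarith
  · rw [min_eq_right h]; nlinarith

/-- For every real `t` and `a > 0`, the minimum over `u ∈ [0,1]` of `u|t| - au` equals
`min(|t|, a) - a`, attained at `u = 1` when `|t| ≤ a` and at `u = 0` when `|t| ≥ a`.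
Consequently, with `g(u) = -a‖u‖₁` and `U = [0,1]^n`,
`F^U_{g,1}(x) + an = Σᵢ min(|xᵢ|, a)`, i.e. the lifted ℓ1 regularization recovers the capped
ℓ1 (CL1) penalty `J_a^{CL1}(x)` up to the additive constant `an`. -/
theorem liftedL1_recovers_CL1 (a : ℝ) (ha : 0 < a) :
    (∀ t : ℝ,
      (∀ u ∈ Set.Icc (0 : ℝ) 1, min |t| a - a ≤ u * |t| - a * u) ∧
      (|t| ≤ a → (1 : ℝ) * |t| - a * 1 = min |t| a - a) ∧
      (a ≤ |t| → (0 : ℝ) * |t| - a * 0 = min |t| a - a)) ∧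
    (∀ (n : ℕ) (x : Fin n → ℝ),
      liftedL1 {u : Fin n → ℝ | ∀ i, u i ∈ Set.Icc (0 : ℝ) 1}
          (fun u => -a * ∑ i, |u i|) 1 x
        + ((a * n : ℝ) : EReal)
      = ((∑ i, min |x i| a : ℝ) : EReal)) := by
  constructor
  · intro t
    refine ⟨fun u hu => key_pt a t u hu, fun h => by rw [min_eq_left h]; ring,
      fun h => by rw [min_eq_right h]; ring⟩
  · intro n x
    set c : ℝ := (∑ i, min |x i| a) - a * n with hc
    have hmain : liftedL1 {u : Fin n → ℝ | ∀ i, u i ∈ Set.Icc (0 : ℝ) 1}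
        (fun u => -a * ∑ i, |u i|) 1 x = ((c : ℝ) : EReal) := by
      unfold liftedL1
      apply le_antisymm
      · set u : Fin n → ℝ := fun i => if |x i| ≤ a then 1 else 0 with hu
        have hmem : u ∈ {u : Fin n → ℝ | ∀ i, u i ∈ Set.Icc (0 : ℝ) 1} := by
          intro i
          by_cases h : |x i| ≤ a <;> simp [hu, h]
        refine le_trans (iInf₂_le u hmem) ?_
        apply EReal.coe_le_coe_iff.mpr
        have hval : ∀ i, u i * |x i| + 1 * (-a * |u i|) = min |x i| a - a := by
          intro i
          by_cases h : |x i| ≤ a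
          · simp [hu, h, min_eq_left h]; ring
          · push_neg at h
            simp [hu, not_le.mpr h, min_eq_right h.le]
        have : (∑ i, u i * |x i|) + 1 * (-a * ∑ i, |u i|) = ∑ i, (min |x i| a - a) := by
          rw [comb a u (fun i => |u i|)]
          refine Finset.sum_congr rfl fun i _ => ?_
          rw [← hval i]; ring
        rw [this, Finset.sum_sub_distrib, Finset.sum_const, Finset.card_univ,
          Fintype.card_fin, nsmul_eq_mul, hc]
        linarith
      · refine le_iInf₂ fun u hu => ?_
        apply EReal.coe_le_coe_iff.mpr
        have habs : ∀ i, |u i| = u i := fun i => abs_of_nonneg (hu i).1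
        have hle : ∀ i, min |x i| a - a ≤ u i * |x i| - a * u i :=
          fun i => key_pt a (x i) (u i) (hu i)
        have h1 : (∑ i, u i * |x i|) + 1 * (-a * ∑ i, |u i|)
            = ∑ i, (u i * |x i| - a * u i) := by
          simp only [habs]; exact comb a u u
        rw [h1, hc]
        have h2 : ∑ i, (min |x i| a - a) ≤ ∑ i, (u i * |x i| - a * u i) :=
          Finset.sum_le_sum fun i _ => hle i
        rw [Finset.sum_sub_distrib, Finset.sum_const, Finset.card_univ,
          Fintype.card_fin, nsmul_eq_mul] at h2
        linarith [h2]
    rw [hmain, ← EReal.coe_add]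
    norm_cast
    rw [hc]; ring
end
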